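/- In the code-generation model with Tardos' accusation functions g1^T, g0^T and any probability density f on [t,1−t], let j ∈ {1,…,n} and let y be any {0,1}^m-valued random variable that is conditionally independent of the row (X_{j1},…,X_{jm}) given (p_1,…,p_m). Then E[S_j] = 0 and E[S_j²] = Σ_{i=1}^m P[y_i = 1] ≤ m; in particular Var(S_j) ≤ m. -/

import Mathlib

/-!
Conditionally on the biases `p`, the pirated word `y` is independent of row `j`, whose entries
are independent Bernoulli(`p i`) variables. Hence row `j` can be averaged out first with `y` held
fixed: resampling row `j` independently preserves the law of the matrix and leaves `y` unchanged.
For fixed `y`, `S_j` is a sum of independent scores that are centred, since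
`p g1(p) + (1 - p) g0(p) = 0`, and of variance `y i`, since `p g1(p)² + (1 - p) g0(p)² = 1`.
-/

open MeasureTheory ProbabilityTheory Real

noncomputable section

/-- Bernoulli measure on `Bool` with parameter `p`. -/
def bern (p : ℝ) : Measure Bool :=
  ENNReal.ofReal p • Measure.dirac true + ENNReal.ofReal (1 - p) • Measure.dirac false

/-- The measure on `ℝ` with density `f` (w.r.t. Lebesgue measure). -/
def biasMeasure (f : ℝ → ℝ) : Measure ℝ :=
  MeasureTheory.volume.withDensity fun p => ENNReal.ofReal (f p)

/-- Joint law of the biases `p = (p_1,…,p_m)` (i.i.d. with density `f`) together with the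
code matrix `X` whose entries `X j i` are, conditionally on `p`, independent
Bernoulli(`p i`). -/
def codeMeasure (n m : ℕ) (f : ℝ → ℝ) :
    Measure ((Fin m → ℝ) × (Fin n → Fin m → Bool)) :=
  (Measure.pi fun _ : Fin m => biasMeasure f).bind fun p =>
    (Measure.dirac p).prod (Measure.pi fun _ : Fin n => Measure.pi fun i : Fin m => bern (p i))

/-- The accusation sum `S_j = Σ_i y_i · (g1 (p_i) if X_{ji} = 1, g0 (p_i) if X_{ji} = 0)`. -/
def accusation (m : ℕ) (g1 g0 : ℝ → ℝ) (p : Fin m → ℝ) (x : Fin m → Bool)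
    (y : Fin m → Bool) : ℝ :=
  ∑ i, if y i then (if x i then g1 (p i) else g0 (p i)) else 0

/-- Tardos' accusation function `g1`. -/
def g1T (p : ℝ) : ℝ := Real.sqrt ((1 - p) / p)

/-- Tardos' accusation function `g0`. -/
def g0T (p : ℝ) : ℝ := - Real.sqrt (p / (1 - p))

open Set Finset

section Tardos

variable {q : ℝ}

theorem tardos_mean_zero (hq : q ∈ Ioo (0 : ℝ) 1) : q * g1T q + (1 - q) * g0T q = 0 := by
  obtain ⟨h0, h1⟩ := hq
  have hq1 : 0 < 1 - q := by linarith
  have hg1 : q * g1T q = (1 - q) * Real.sqrt (q / (1 - q)) := by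
    rw [g1T]
    nth_rewrite 1 [← Real.sqrt_sq h0.le]
    nth_rewrite 2 [← Real.sqrt_sq hq1.le]
    rw [← Real.sqrt_mul (sq_nonneg _), ← Real.sqrt_mul (sq_nonneg _)]
    congr 1
    field_simp
  rw [g0T, hg1]
  ring

theorem tardos_second_moment (hq : q ∈ Ioo (0 : ℝ) 1) :
    q * g1T q ^ 2 + (1 - q) * g0T q ^ 2 = 1 := by
  obtain ⟨h0, h1⟩ := hq
  have hq1 : 0 < 1 - q := by linarith
  rw [g1T, g0T, neg_sq, Real.sq_sqrt (by positivity), Real.sq_sqrt (by positivity)]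
  field_simp
  ring

theorem measurable_g1T : Measurable g1T := by unfold g1T; fun_prop

theorem measurable_g0T : Measurable g0T := by unfold g0T; fun_prop

variable {t : ℝ} (ht : 0 < t) (hq : q ∈ Icc t (1 - t))
include ht hq

theorem abs_g1T_le : |g1T q| ≤ Real.sqrt ((1 - t) / t) := by
  rw [g1T, abs_of_nonneg (Real.sqrt_nonneg _)]
  exact Real.sqrt_le_sqrt (div_le_div₀ (by linarith [hq.1, hq.2]) (by linarith [hq.1]) ht hq.1)

theorem abs_g0T_le : |g0T q| ≤ Real.sqrt ((1 - t) / t) := by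
  rw [g0T, abs_neg, abs_of_nonneg (Real.sqrt_nonneg _)]
  exact Real.sqrt_le_sqrt (div_le_div₀ (by linarith [hq.1, hq.2]) hq.2 ht (by linarith [hq.2]))

end Tardos

section Accusation

variable {m : ℕ} {g1 g0 : ℝ → ℝ}

theorem abs_accusation_le {B : ℝ} {p : Fin m → ℝ} (hB : ∀ i, |g1 (p i)| ≤ B ∧ |g0 (p i)| ≤ B)
    (x y : Fin m → Bool) : |accusation m g1 g0 p x y| ≤ m * B := by
  calc |accusation m g1 g0 p x y|
      ≤ ∑ i, |if y i then (if x i then g1 (p i) else g0 (p i)) else 0| :=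
        Finset.abs_sum_le_sum_abs _ _
    _ ≤ ∑ _i : Fin m, B := by
        refine Finset.sum_le_sum fun i _ => ?_
        have hB0 : 0 ≤ B := (abs_nonneg _).trans (hB i).1
        split_ifs <;> simp [(hB i).1, (hB i).2, hB0]
    _ = m * B := by simp

theorem measurable_accusation (hg1 : Measurable g1) (hg0 : Measurable g0) :
    Measurable fun z : (Fin m → ℝ) × (Fin m → Bool) × (Fin m → Bool) =>
      accusation m g1 g0 z.1 z.2.1 z.2.2 := by
  refine measurable_from_prod_countable_left fun xy => Finset.measurable_sum _ fun i _ => ?_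
  dsimp only
  split_ifs <;> fun_prop

end Accusation

section Bernoulli

variable {q : ℝ}

theorem isProbabilityMeasure_bern (hq : q ∈ Icc (0 : ℝ) 1) : IsProbabilityMeasure (bern q) :=
  ⟨by simp [bern, ← ENNReal.ofReal_add hq.1 (sub_nonneg.2 hq.2)]⟩

instance (q : Icc (0 : ℝ) 1) : IsProbabilityMeasure (bern q) := isProbabilityMeasure_bern q.2

theorem integral_bern (hq : q ∈ Icc (0 : ℝ) 1) (c : Bool → ℝ) :
    ∫ b, c b ∂bern q = q * c true + (1 - q) * c false := by
  rw [bern, integral_add_measure, integral_smul_measure, integral_smul_measure, integral_dirac,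
    integral_dirac, ENNReal.toReal_ofReal hq.1, ENNReal.toReal_ofReal (sub_nonneg.2 hq.2),
    smul_eq_mul, smul_eq_mul]
  all_goals exact Integrable.of_finite.smul_measure ENNReal.ofReal_ne_top

theorem measurable_bern : Measurable bern :=
  Measure.measurable_of_measurable_coe _ fun s _ => by
    simp only [bern, Measure.add_apply, Measure.smul_apply, smul_eq_mul]
    fun_prop

end Bernoulli

section Row

variable {m : ℕ} {p : Fin m → ℝ}

def tardosScore (p : Fin m → ℝ) (y : Fin m → Bool) (i : Fin m) (b : Bool) : ℝ :=
  if y i then (if b then g1T (p i) else g0T (p i)) else 0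

theorem accusation_eq_sum_tardosScore (x y : Fin m → Bool) :
    accusation m g1T g0T p x y = ∑ i, tardosScore p y i (x i) := rfl

variable (hp : ∀ i, p i ∈ Ioo (0 : ℝ) 1) (y : Fin m → Bool)
include hp

theorem integral_tardosScore (i : Fin m) : ∫ b, tardosScore p y i b ∂bern (p i) = 0 := by
  rw [integral_bern (Ioo_subset_Icc_self (hp i))]
  by_cases hy : y i <;> simp [tardosScore, hy, tardos_mean_zero (hp i)]

theorem integral_tardosScore_sq (i : Fin m) :
    ∫ b, tardosScore p y i b ^ 2 ∂bern (p i) = if y i then 1 else 0 := by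
  rw [integral_bern (Ioo_subset_Icc_self (hp i))]
  by_cases hy : y i <;> simp [tardosScore, hy, tardos_second_moment (hp i)]

theorem integral_accusation_row :
    ∫ x, accusation m g1T g0T p x y ∂Measure.pi (fun i => bern (p i)) = 0 := by
  have := fun i => isProbabilityMeasure_bern (Ioo_subset_Icc_self (hp i))
  simp_rw [accusation_eq_sum_tardosScore]
  rw [integral_finsetSum _ fun i _ => Integrable.of_finite]
  refine Finset.sum_eq_zero fun i _ => ?_
  rw [integral_comp_eval (by fun_prop), integral_tardosScore hp]

theorem integral_accusation_sq_row :
    ∫ x, accusation m g1T g0T p x y ^ 2 ∂Measure.pi (fun i => bern (p i)) =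
      ∑ i, if y i then 1 else 0 := by
  have := fun i => isProbabilityMeasure_bern (Ioo_subset_Icc_self (hp i))
  have hsum : (fun x => accusation m g1T g0T p x y) =
      ∑ i, fun x : Fin m → Bool => tardosScore p y i (x i) := by
    ext x
    simp [accusation_eq_sum_tardosScore, Finset.sum_apply]
  have hvar := variance_sum_pi (μ := fun i => bern (p i)) (X := tardosScore p y)
    fun i => MemLp.of_discrete
  rw [← hsum, variance_eq_sub MemLp.of_discrete, integral_accusation_row hp] at hvar
  simp_rw [variance_eq_sub MemLp.of_discrete, integral_tardosScore hp] at hvar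
  simpa [integral_tardosScore_sq hp] using hvar

end Row

section Resample

variable {ι : Type*} [Fintype ι] [DecidableEq ι] {α : ι → Type*} [∀ i, MeasurableSpace (α i)]
  (μ : ∀ i, Measure (α i)) [∀ i, IsProbabilityMeasure (μ i)] (j : ι)

theorem measurePreserving_update_prod :
    MeasurePreserving (fun z : (∀ i, α i) × α j => Function.update z.1 j z.2)
      ((Measure.pi μ).prod (μ j)) (Measure.pi μ) := by
  refine ⟨measurable_update', (Measure.pi_eq fun s hs => ?_).symm⟩
  have hpre : (fun z : (∀ i, α i) × α j => Function.update z.1 j z.2) ⁻¹' univ.pi s =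
      univ.pi (Function.update s j univ) ×ˢ s j := by
    ext ⟨X, x⟩
    simp only [Set.mem_preimage, mem_univ_pi, mem_prod]
    constructor
    · intro h
      refine ⟨fun i => ?_, by simpa using h j⟩
      rcases eq_or_ne i j with rfl | hi
      · simp
      · simpa [Function.update_of_ne hi] using h i
    · rintro ⟨hX, hx⟩ i
      rcases eq_or_ne i j with rfl | hi
      · simpa using hx
      · simpa [Function.update_of_ne hi] using hX i
  rw [Measure.map_apply measurable_update' (.univ_pi hs), hpre, Measure.prod_prod, Measure.pi_pi,
    ← Finset.prod_erase_mul _ _ (Finset.mem_univ j),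
    ← Finset.prod_erase_mul _ _ (Finset.mem_univ j)]
  simp only [Function.update_self, measure_univ, mul_one]
  congr 1
  refine Finset.prod_congr rfl fun i hi => ?_
  rw [Function.update_of_ne (Finset.ne_of_mem_erase hi)]

variable {E : Type*} [NormedAddCommGroup E] [NormedSpace ℝ E]

theorem integral_pi_eq_integral_integral_of_update {h : α j → (∀ i, α i) → E}
    (hh : ∀ x X y, h x (Function.update X j y) = h x X)
    (hint : Integrable (fun X => h (X j) X) (Measure.pi μ)) :
    ∫ X, h (X j) X ∂Measure.pi μ = ∫ X, ∫ x, h x X ∂μ j ∂Measure.pi μ := by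
  have hmp := measurePreserving_update_prod μ j
  conv_lhs => rw [← hmp.map_eq]
  rw [integral_map hmp.measurable.aemeasurable
    (by rw [hmp.map_eq]; exact hint.aestronglyMeasurable)]
  simp only [Function.update_self, hh]
  refine integral_prod (fun z : (∀ i, α i) × α j => h z.2 z.1) ?_
  simpa [Function.comp_def, hh] using hmp.integrable_comp_of_integrable hint

end Resample

theorem Measurable.measure_pi {β : Type*} [MeasurableSpace β] {ι : Type*} [Fintype ι]
    {α : ι → Type*} [∀ i, MeasurableSpace (α i)] {μ : β → ∀ i, Measure (α i)}
    [∀ b i, IsProbabilityMeasure (μ b i)] (h : ∀ i, Measurable fun b => μ b i) :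
    Measurable fun b => Measure.pi (μ b) := by
  refine .measure_of_isPiSystem_of_isProbabilityMeasure generateFrom_pi.symm isPiSystem_pi ?_
  rintro _ ⟨s, hs, rfl⟩
  simp only [Measure.pi_pi]
  exact Finset.measurable_prod _ fun i _ => (Measure.measurable_coe (hs i trivial)).comp (h i)

/-- Biases are clamped to `[0, 1]` to make this a Markov kernel; the clamp is invisible on the
support of any bias law. -/
def codeKernel (n m : ℕ) : Kernel (Fin m → ℝ) (Fin n → Fin m → Bool) where
  toFun p := Measure.pi fun _ : Fin n => Measure.pi fun i => bern (projIcc 0 1 zero_le_one (p i))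
  measurable' := Measurable.measure_pi fun _ => Measurable.measure_pi fun i =>
    measurable_bern.comp ((continuous_projIcc (h := zero_le_one)).subtype_val.measurable.comp
      (measurable_pi_apply i))

instance (n m : ℕ) : IsMarkovKernel (codeKernel n m) :=
  ⟨fun _ => by rw [codeKernel, Kernel.coe_mk]; infer_instance⟩

theorem codeKernel_apply_of_mem {n m : ℕ} {p : Fin m → ℝ} (hp : ∀ i, p i ∈ Icc (0 : ℝ) 1) :
    codeKernel n m p = Measure.pi fun _ : Fin n => Measure.pi fun i => bern (p i) := by
  simp [codeKernel, projIcc_of_mem _ (hp _)]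

theorem bind_eq_compProd_codeKernel {n m : ℕ} {μ : Measure (Fin m → ℝ)} [SFinite μ]
    (hμ : ∀ᵐ p ∂μ, ∀ i, p i ∈ Icc (0 : ℝ) 1) :
    μ.bind (fun p => (Measure.dirac p).prod
      (Measure.pi fun _ : Fin n => Measure.pi fun i => bern (p i))) = μ ⊗ₘ codeKernel n m := by
  rw [Measure.compProd_eq_comp_prod]
  refine Measure.bind_congr_right ?_
  filter_upwards [hμ] with p hp
  rw [Kernel.prod_apply, Kernel.id_apply, codeKernel_apply_of_mem hp]

section ConditionalIndependence

variable {n m : ℕ} {μ : Measure (Fin m → ℝ)} [SFinite μ] {Ω : Type*} [MeasurableSpace Ω]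
  {ν : Measure Ω} [SFinite ν]

theorem integral_compProd_codeKernel_prod {Φ : ((Fin m → ℝ) × (Fin n → Fin m → Bool)) × Ω → ℝ}
    (hΦ : Integrable Φ ((μ ⊗ₘ codeKernel n m).prod ν)) :
    ∫ q, Φ q ∂(μ ⊗ₘ codeKernel n m).prod ν =
      ∫ r, ∫ p, ∫ X, Φ ((p, X), r) ∂codeKernel n m p ∂μ ∂ν := by
  rw [integral_prod_symm _ hΦ]
  refine integral_congr_ae ?_
  filter_upwards [hΦ.prod_left_ae] with r hr
  exact Measure.integral_compProd hr

theorem integral_eq_of_integral_row_eq (hμ : ∀ᵐ p ∂μ, ∀ i, p i ∈ Icc (0 : ℝ) 1) (j : Fin n)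
    {ρ : (Fin m → ℝ) → (Fin n → Fin m → Bool) → Ω → (Fin m → Bool)}
    (hρ : ∀ p X X' r, (∀ j' : Fin n, j' ≠ j → X j' = X' j') → ρ p X r = ρ p X' r)
    {G : (Fin m → ℝ) → (Fin m → Bool) → (Fin m → Bool) → ℝ}
    {H : (Fin m → ℝ) → (Fin m → Bool) → ℝ}
    (hGH : ∀ᵐ p ∂μ, ∀ y, ∫ x, G p x y ∂Measure.pi (fun i => bern (p i)) = H p y)
    (hG : Integrable (fun q => G q.1.1 (q.1.2 j) (ρ q.1.1 q.1.2 q.2))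
      ((μ ⊗ₘ codeKernel n m).prod ν))
    (hH : Integrable (fun q => H q.1.1 (ρ q.1.1 q.1.2 q.2)) ((μ ⊗ₘ codeKernel n m).prod ν)) :
    ∫ q, G q.1.1 (q.1.2 j) (ρ q.1.1 q.1.2 q.2) ∂(μ ⊗ₘ codeKernel n m).prod ν =
      ∫ q, H q.1.1 (ρ q.1.1 q.1.2 q.2) ∂(μ ⊗ₘ codeKernel n m).prod ν := by
  rw [integral_compProd_codeKernel_prod hG, integral_compProd_codeKernel_prod hH]
  refine integral_congr_ae (ae_of_all _ fun r => integral_congr_ae ?_)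
  filter_upwards [hμ, hGH] with p hp hpGH
  have := fun i => isProbabilityMeasure_bern (hp i)
  have hρj : ∀ X x, ρ p (Function.update X j x) r = ρ p X r := fun X x =>
    hρ p _ _ r fun j' hj' => Function.update_of_ne hj' x X
  rw [codeKernel_apply_of_mem hp, integral_pi_eq_integral_integral_of_update _ j
    (h := fun x X => G p x (ρ p X r)) (fun x X y => by rw [hρj]) Integrable.of_finite]
  simp_rw [hpGH]

end ConditionalIndependence

theorem ae_biasMeasure_mem {f : ℝ → ℝ} {s : Set ℝ} (hs : MeasurableSet s)
    (hf : ∀ p, p ∉ s → f p = 0) : ∀ᵐ p ∂biasMeasure f, p ∈ s := by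
  change biasMeasure f sᶜ = 0
  rw [biasMeasure, withDensity_apply _ hs.compl,
    setLIntegral_congr_fun (g := fun _ => 0) hs.compl fun p hp => by simp [hf p hp]]
  simp

theorem ae_pi_biasMeasure_mem {m : ℕ} {f : ℝ → ℝ} [SigmaFinite (biasMeasure f)]
    {s : Set ℝ} (hs : MeasurableSet s) (hf : ∀ p, p ∉ s → f p = 0) :
    ∀ᵐ p ∂Measure.pi fun _ : Fin m => biasMeasure f, ∀ i, p i ∈ s :=
  ae_all_iff.2 fun i => (Measure.quasiMeasurePreserving_eval _ i).ae (ae_biasMeasure_mem hs hf)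

theorem memLp_accusation {β : Type*} [MeasurableSpace β] {P : Measure β} [IsFiniteMeasure P]
    {m : ℕ} {t : ℝ} (ht : 0 < t) {p : β → Fin m → ℝ} {x y : β → Fin m → Bool}
    (hp : Measurable p) (hx : Measurable x) (hy : Measurable y)
    (hbox : ∀ᵐ b ∂P, ∀ i, p b i ∈ Icc t (1 - t)) :
    MemLp (fun b => accusation m g1T g0T (p b) (x b) (y b)) 2 P := by
  refine .of_bound ((measurable_accusation measurable_g1T measurable_g0T).comp
    (hp.prodMk (hx.prodMk hy))).aestronglyMeasurable (m * Real.sqrt ((1 - t) / t)) ?_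
  filter_upwards [hbox] with b hb
  exact abs_accusation_le (fun i => ⟨abs_g1T_le ht (hb i), abs_g0T_le ht (hb i)⟩) _ _

theorem ite_eq_indicator_setOf {α : Type*} {k : ℕ} (y : α → Fin k → Bool) (a : α) (i : Fin k) :
    (if y a i then (1 : ℝ) else 0) = {a | y a i = true}.indicator 1 a := by
  simp [Set.indicator_apply]

section Count

variable {α : Type*} [MeasurableSpace α] {μ : Measure α} [IsFiniteMeasure μ] {k : ℕ}
  {y : α → Fin k → Bool} (hy : Measurable y)
include hy

theorem measurableSet_setOf_apply_eq_true (i : Fin k) : MeasurableSet {a | y a i = true} :=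
  (measurable_pi_apply i).comp hy (measurableSet_singleton true)

theorem integrable_sum_ite : Integrable (fun a => ∑ i, if y a i then (1 : ℝ) else 0) μ := by
  simp_rw [ite_eq_indicator_setOf]
  exact integrable_finsetSum _ fun i _ =>
    (integrable_const 1).indicator (measurableSet_setOf_apply_eq_true hy i)

theorem integral_sum_ite_eq_sum_measureReal :
    ∫ a, (∑ i, if y a i then (1 : ℝ) else 0) ∂μ = ∑ i, (μ {a | y a i = true}).toReal := by
  simp_rw [ite_eq_indicator_setOf]
  rw [integral_finsetSum _ fun i _ =>
    (integrable_const 1).indicator (measurableSet_setOf_apply_eq_true hy i)]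
  simp_rw [integral_indicator_one (measurableSet_setOf_apply_eq_true hy _), measureReal_def]

end Count

/-- The pirated word is `ρ p X r`, where the auxiliary randomness `r ∼ μ'` is independent of the
code; its conditional independence from row `j` is encoded by `ρ` ignoring that row. -/
theorem innocent_accusation_moments_general
    (n m : ℕ)
    (t : ℝ) (ht : t ∈ Set.Ioo (0:ℝ) (1/2))
    (f : ℝ → ℝ)
    (hf_supp : ∀ p, p ∉ Set.Icc t (1-t) → f p = 0)
    (hf_prob : IsProbabilityMeasure (biasMeasure f))
    (Ω' : Type*) [MeasurableSpace Ω'] (μ' : Measure Ω') [IsProbabilityMeasure μ']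
    (j : Fin n)
    (ρ : (Fin m → ℝ) → (Fin n → Fin m → Bool) → Ω' → (Fin m → Bool))
    (hρ_meas : Measurable
      (fun q : ((Fin m → ℝ) × (Fin n → Fin m → Bool)) × Ω' => ρ q.1.1 q.1.2 q.2))
    (hρ_indep : ∀ p X X' r, (∀ j' : Fin n, j' ≠ j → X j' = X' j') → ρ p X r = ρ p X' r) :
    (∫ q, accusation m g1T g0T q.1.1 (q.1.2 j) (ρ q.1.1 q.1.2 q.2)
        ∂((codeMeasure n m f).prod μ')) = 0
    ∧ (∫ q, (accusation m g1T g0T q.1.1 (q.1.2 j) (ρ q.1.1 q.1.2 q.2)) ^ 2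
        ∂((codeMeasure n m f).prod μ'))
      = ∑ i : Fin m,
          (((codeMeasure n m f).prod μ') {q | ρ q.1.1 q.1.2 q.2 i = true}).toReal
    ∧ (∑ i : Fin m,
          (((codeMeasure n m f).prod μ') {q | ρ q.1.1 q.1.2 q.2 i = true}).toReal)
        ≤ (m : ℝ)
    ∧ variance (fun q => accusation m g1T g0T q.1.1 (q.1.2 j) (ρ q.1.1 q.1.2 q.2))
        ((codeMeasure n m f).prod μ') ≤ (m : ℝ) := by
  have hbox : ∀ᵐ p ∂Measure.pi fun _ : Fin m => biasMeasure f, ∀ i, p i ∈ Icc t (1 - t) :=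
    ae_pi_biasMeasure_mem measurableSet_Icc hf_supp
  have hunit : ∀ᵐ p ∂Measure.pi fun _ : Fin m => biasMeasure f, ∀ i, p i ∈ Ioo (0 : ℝ) 1 :=
    hbox.mono fun p hp i => ⟨ht.1.trans_le (hp i).1, by linarith [(hp i).2, ht.1]⟩
  have hIcc := hunit.mono fun p hp i => Ioo_subset_Icc_self (hp i)
  rw [show codeMeasure n m f = _ from bind_eq_compProd_codeKernel hIcc]
  set P := (Measure.pi (fun _ : Fin m => biasMeasure f) ⊗ₘ codeKernel n m).prod μ'
  have hPbox : ∀ᵐ q ∂P, ∀ i, q.1.1 i ∈ Icc t (1 - t) :=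
    Measure.quasiMeasurePreserving_fst.ae (Measure.ae_compProd_of_ae_fst _ (by measurability) hbox)
  have hS : MemLp (fun q => accusation m g1T g0T q.1.1 (q.1.2 j) (ρ q.1.1 q.1.2 q.2)) 2 P :=
    memLp_accusation ht.1 (by fun_prop) (by fun_prop) hρ_meas hPbox
  have hmean := integral_eq_of_integral_row_eq (H := fun _ _ => 0) hIcc j hρ_indep
    (hunit.mono fun p hp => integral_accusation_row hp) (hS.integrable one_le_two)
    (integrable_zero _ _ _)
  have hsq := integral_eq_of_integral_row_eq hIcc j hρ_indep
    (hunit.mono fun p hp => integral_accusation_sq_row hp)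
    hS.integrable_sq (integrable_sum_ite hρ_meas)
  rw [integral_zero] at hmean
  rw [integral_sum_ite_eq_sum_measureReal hρ_meas] at hsq
  have hle : ∑ i, (P {q | ρ q.1.1 q.1.2 q.2 i = true}).toReal ≤ m :=
    (Finset.sum_le_sum fun i _ => ENNReal.toReal_le_of_le_ofReal zero_le_one
      (ENNReal.ofReal_one ▸ prob_le_one)).trans (by simp)
  refine ⟨hmean, hsq, hle, ?_⟩
  rw [variance_eq_sub hS]
  simp only [Pi.pow_apply]
  rw [hmean, hsq]
  simpa using hle

/-- in the code-generation model with Tardos' accusation functions and any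
bias density `f` on `[t,1-t]`, if the pirated word `y` is conditionally independent of
the row of user `j` given the biases `p` (modelled as `y = ρ p X r` with `ρ` not
depending on row `j` of `X`, and `r` independent auxiliary randomness), then
`E[S_j] = 0`, `E[S_j²] = Σ_i P[y_i = 1] ≤ m` and hence `Var S_j ≤ m`. -/
theorem innocent_accusation_moments
    (n m : ℕ) (hn : 1 ≤ n) (hm : 1 ≤ m)
    (t : ℝ) (ht : t ∈ Set.Ioo (0:ℝ) (1/2))
    (f : ℝ → ℝ) (hf_meas : Measurable f) (hf_nonneg : ∀ p, 0 ≤ f p)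
    (hf_supp : ∀ p, p ∉ Set.Icc t (1-t) → f p = 0)
    (hf_prob : IsProbabilityMeasure (biasMeasure f))
    (Ω' : Type*) [MeasurableSpace Ω'] (μ' : Measure Ω') [IsProbabilityMeasure μ']
    (j : Fin n)
    (ρ : (Fin m → ℝ) → (Fin n → Fin m → Bool) → Ω' → (Fin m → Bool))
    (hρ_meas : Measurable
      (fun q : ((Fin m → ℝ) × (Fin n → Fin m → Bool)) × Ω' => ρ q.1.1 q.1.2 q.2))
    (hρ_indep : ∀ p X X' r, (∀ j' : Fin n, j' ≠ j → X j' = X' j') → ρ p X r = ρ p X' r) :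
    (∫ q, accusation m g1T g0T q.1.1 (q.1.2 j) (ρ q.1.1 q.1.2 q.2)
        ∂((codeMeasure n m f).prod μ')) = 0
    ∧ (∫ q, (accusation m g1T g0T q.1.1 (q.1.2 j) (ρ q.1.1 q.1.2 q.2)) ^ 2
        ∂((codeMeasure n m f).prod μ'))
      = ∑ i : Fin m,
          (((codeMeasure n m f).prod μ') {q | ρ q.1.1 q.1.2 q.2 i = true}).toReal
    ∧ (∑ i : Fin m,
          (((codeMeasure n m f).prod μ') {q | ρ q.1.1 q.1.2 q.2 i = true}).toReal)
        ≤ (m : ℝ)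
    ∧ variance (fun q => accusation m g1T g0T q.1.1 (q.1.2 j) (ρ q.1.1 q.1.2 q.2))
        ((codeMeasure n m f).prod μ') ≤ (m : ℝ) :=
  innocent_accusation_moments_general n m t ht f hf_supp hf_prob Ω' μ' j ρ hρ_meas hρ_indep

end
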